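/- For all real μ > 0 and B > 0, writing p = e₀ · exp(μQ) with e₀ = (1,0,0,0,0,0,0) and entries p₀,…,p₆, one has the identity (p₀ + p₆) + p₅·e^{−B} + (1/3)(1 − e^{−B})·(p₁ + p₃ + p₅) = (1/3)·(1 + (3/4)e^{−5μ}e^{−B} + (1 − (1/2)e^{−B})e^{−3μ} + (1 − (1/4)e^{−B})e^{−μ}). (This is the conditional probability that a transfer sequence induces the matching topology ab|c on a species tree of type (ab;c;*), given that no A-joining transfer occurs before time t₂, where μ = (1/3)λt₂ and B = 3λ(t₃ − t₂).) -/

import Mathlib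

open Matrix

/-- The rate matrix `Q` of the 7-state continuous-time Markov chain. -/
noncomputable def Q : Matrix (Fin 7) (Fin 7) ℝ :=
  !![-3, 2, 0, 0, 0, 0, 1;
      1,-2, 1, 0, 0, 0, 0;
      0, 1,-3, 1, 1, 0, 0;
      0, 0, 1,-2, 1, 0, 0;
      0, 0, 1, 1,-3, 1, 0;
      0, 0, 0, 0, 1,-2, 1;
      1, 0, 0, 0, 0, 2,-3]

/-- `p μ = e₀ · exp(μQ)`, the state distribution at time `μ` started from state `0`. -/
noncomputable def p (μ : ℝ) : Fin 7 → ℝ :=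
  Matrix.vecMul (![1, 0, 0, 0, 0, 0, 0] : Fin 7 → ℝ) (NormedSpace.exp (μ • Q))

attribute [local instance] Matrix.linftyOpNormedRing Matrix.linftyOpNormedAlgebra

section EvalLemmas
variable {α : Type*} (a b c d e f g : α)
lemma cw0 : ![a,b,c,d,e,f,g] 0 = a := rfl
lemma cw1 : ![a,b,c,d,e,f,g] 1 = b := rfl
lemma cw2 : ![a,b,c,d,e,f,g] 2 = c := rfl
lemma cw3 : ![a,b,c,d,e,f,g] 3 = d := rfl
lemma cw4 : ![a,b,c,d,e,f,g] 4 = e := rfl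
lemma cw5 : ![a,b,c,d,e,f,g] 5 = f := rfl
lemma cw6 : ![a,b,c,d,e,f,g] 6 = g := rfl
lemma cm0 : ![a,b,c,d,e,f,g] ⟨0, by omega⟩ = a := rfl
lemma cm1 : ![a,b,c,d,e,f,g] ⟨1, by omega⟩ = b := rfl
lemma cm2 : ![a,b,c,d,e,f,g] ⟨2, by omega⟩ = c := rfl
lemma cm3 : ![a,b,c,d,e,f,g] ⟨3, by omega⟩ = d := rfl
lemma cm4 : ![a,b,c,d,e,f,g] ⟨4, by omega⟩ = e := rfl
lemma cm5 : ![a,b,c,d,e,f,g] ⟨5, by omega⟩ = f := rfl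
lemma cm6 : ![a,b,c,d,e,f,g] ⟨6, by omega⟩ = g := rfl
end EvalLemmas

/-- Applying the exponential of a matrix to an eigenvector. -/
lemma exp_mulVec_eigen (A : Matrix (Fin 7) (Fin 7) ℝ) (v : Fin 7 → ℝ) (c : ℝ)
    (h : A *ᵥ v = c • v) :
    (NormedSpace.exp A) *ᵥ v = Real.exp c • v := by
  have hpow : ∀ n : ℕ, (A ^ n) *ᵥ v = (c ^ n) • v := by
    intro n
    induction n with
    | zero => simp
    | succ n ih =>
      rw [pow_succ, ← Matrix.mulVec_mulVec, h, Matrix.mulVec_smul, ih,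
        smul_smul, pow_succ, mul_comm]
  let L : Matrix (Fin 7) (Fin 7) ℝ →ₗ[ℝ] (Fin 7 → ℝ) :=
    { toFun := fun M => M *ᵥ v
      map_add' := fun M N => Matrix.add_mulVec M N v
      map_smul' := fun a M => Matrix.smul_mulVec a M v }
  let L' : Matrix (Fin 7) (Fin 7) ℝ →L[ℝ] (Fin 7 → ℝ) :=
    LinearMap.toContinuousLinearMap L
  have hs : Summable fun n : ℕ => ((n.factorial : ℝ))⁻¹ • A ^ n :=
    NormedSpace.expSeries_summable' A
  have key : L' (NormedSpace.exp A) = ∑' n : ℕ, L' (((n.factorial : ℝ))⁻¹ • A ^ n) := by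
    rw [NormedSpace.exp_eq_tsum ℝ]
    exact L'.map_tsum hs
  have hL : ∀ M : Matrix (Fin 7) (Fin 7) ℝ, L' M = M *ᵥ v := fun _ => rfl
  have hs2 : Summable fun n : ℕ => ((n.factorial : ℝ))⁻¹ • c ^ n :=
    NormedSpace.expSeries_summable' c
  calc (NormedSpace.exp A) *ᵥ v = L' (NormedSpace.exp A) := rfl
    _ = ∑' n : ℕ, L' (((n.factorial : ℝ))⁻¹ • A ^ n) := key
    _ = ∑' n : ℕ, (((n.factorial : ℝ))⁻¹ • c ^ n) • v := by
        refine tsum_congr fun n => ?_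
        rw [hL, Matrix.smul_mulVec, hpow, smul_smul, smul_eq_mul]
    _ = (∑' n : ℕ, ((n.factorial : ℝ))⁻¹ • c ^ n) • v := by
        refine Summable.tsum_smul_const ?_ v
        simpa using hs2
    _ = Real.exp c • v := by
        rw [Real.exp_eq_exp_ℝ, NormedSpace.exp_eq_tsum ℝ]

theorem match_prob_given_no_joining_abc_star (μ B : ℝ) (hμ : 0 < μ) (hB : 0 < B) :
    (p μ 0 + p μ 6) + p μ 5 * Real.exp (-B)
        + (1/3) * (1 - Real.exp (-B)) * (p μ 1 + p μ 3 + p μ 5) =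
      (1/3) * (1 + (3/4) * Real.exp (-5 * μ) * Real.exp (-B)
        + (1 - (1/2) * Real.exp (-B)) * Real.exp (-3 * μ)
        + (1 - (1/4) * Real.exp (-B)) * Real.exp (-μ)) := by
  set E := NormedSpace.exp (μ • Q) with hE
  have hp : ∀ j, p μ j = E 0 j := by
    intro j
    simp only [p, Matrix.vecMul, dotProduct, Fin.sum_univ_seven,
      cw0, cw1, cw2, cw3, cw4, cw5, cw6, ← hE]
    ring
  have eig : ∀ (v : Fin 7 → ℝ) (c : ℝ), Q *ᵥ v = c • v →
      (E 0 0 * v 0 + E 0 1 * v 1 + E 0 2 * v 2 + E 0 3 * v 3 + E 0 4 * v 4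
        + E 0 5 * v 5 + E 0 6 * v 6) = Real.exp (μ * c) * v 0 := by
    intro v c h
    have h2 : (μ • Q) *ᵥ v = (μ * c) • v := by
      rw [Matrix.smul_mulVec, h, smul_smul]
    have h3 := exp_mulVec_eigen (μ • Q) v (μ * c) h2
    have h4 := congrFun h3 0
    simpa [Matrix.mulVec, dotProduct, Fin.sum_univ_seven, ← hE] using h4
  have e0 : Q *ᵥ (![1,1,1,1,1,1,1] : Fin 7 → ℝ) = (0 : ℝ) • ![1,1,1,1,1,1,1] := by
    funext i
    fin_cases i <;>
    · simp only [Q, Matrix.mulVec, dotProduct, Fin.sum_univ_seven, Matrix.of_apply,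
        Pi.smul_apply, smul_eq_mul, cw0, cw1, cw2, cw3, cw4, cw5, cw6,
        cm0, cm1, cm2, cm3, cm4, cm5, cm6]
      norm_num
  have e1a : Q *ᵥ (![-2,-2,0,1,1,1,0] : Fin 7 → ℝ) = (-1 : ℝ) • ![-2,-2,0,1,1,1,0] := by
    funext i
    fin_cases i <;>
    · simp only [Q, Matrix.mulVec, dotProduct, Fin.sum_univ_seven, Matrix.of_apply,
        Pi.smul_apply, smul_eq_mul, cw0, cw1, cw2, cw3, cw4, cw5, cw6,
        cm0, cm1, cm2, cm3, cm4, cm5, cm6]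
      norm_num
  have e1b : Q *ᵥ (![4,3,-1,-3,-2,0,2] : Fin 7 → ℝ) = (-1 : ℝ) • ![4,3,-1,-3,-2,0,2] := by
    funext i
    fin_cases i <;>
    · simp only [Q, Matrix.mulVec, dotProduct, Fin.sum_univ_seven, Matrix.of_apply,
        Pi.smul_apply, smul_eq_mul, cw0, cw1, cw2, cw3, cw4, cw5, cw6,
        cm0, cm1, cm2, cm3, cm4, cm5, cm6]
      norm_num
  have e3 : Q *ᵥ (![2,-1,-1,2,-1,-1,2] : Fin 7 → ℝ) = (-3 : ℝ) • ![2,-1,-1,2,-1,-1,2] := by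
    funext i
    fin_cases i <;>
    · simp only [Q, Matrix.mulVec, dotProduct, Fin.sum_univ_seven, Matrix.of_apply,
        Pi.smul_apply, smul_eq_mul, cw0, cw1, cw2, cw3, cw4, cw5, cw6,
        cm0, cm1, cm2, cm3, cm4, cm5, cm6]
      norm_num
  have e5 : Q *ᵥ (![-2,1,-1,0,1,-1,2] : Fin 7 → ℝ) = (-5 : ℝ) • ![-2,1,-1,0,1,-1,2] := by
    funext i
    fin_cases i <;>
    · simp only [Q, Matrix.mulVec, dotProduct, Fin.sum_univ_seven, Matrix.of_apply,
        Pi.smul_apply, smul_eq_mul, cw0, cw1, cw2, cw3, cw4, cw5, cw6,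
        cm0, cm1, cm2, cm3, cm4, cm5, cm6]
      norm_num
  have h0 := eig _ _ e0
  have h1a := eig _ _ e1a
  have h1b := eig _ _ e1b
  have h3 := eig _ _ e3
  have h5 := eig _ _ e5
  simp only [cw0, cw1, cw2, cw3, cw4, cw5, cw6] at h0 h1a h1b h3 h5
  have r0 : μ * (0:ℝ) = 0 := by ring
  have r1 : μ * (-1:ℝ) = -μ := by ring
  have r3 : μ * (-3:ℝ) = -3 * μ := by ring
  have r5 : μ * (-5:ℝ) = -5 * μ := by ring
  rw [r0, Real.exp_zero] at h0
  rw [r1] at h1a h1b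
  rw [r3] at h3
  rw [r5] at h5
  simp only [hp]
  linear_combination (1/3) * h0 + (1/6 + (11/24) * Real.exp (-B)) * h1a
    + ((1/6 + (5/24) * Real.exp (-B))) * h1b + (1/6 - (1/12) * Real.exp (-B)) * h3
    + (-(1/8) * Real.exp (-B)) * h5
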